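/- Let A be a unital associative ring and f ∈ A a regular element such that ad(f) is locally nilpotent on A, so that S = {f^n : n ∈ ℕ} is an Ore set in A and the Ore localization S⁻¹A exists. Let M be a simple left A-module on which f acts injectively. Then the localized module S⁻¹M (the Ore localization of M at S, equivalently the base change of M to S⁻¹A) is a simple left S⁻¹A-module. -/

import Mathlib

open OreLocalization

/-!
A submodule `N` of `S⁻¹X` is determined by its preimage `{x | x /ₒ 1 ∈ N}` in `X`, because
`x /ₒ s ∈ N ↔ x /ₒ 1 ∈ N`. If every element of `S` acts injectively on `X`, then `x ↦ x /ₒ 1` is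
injective, so this preimage map sends `⊥` to `⊥` (and `⊤` to `⊤`). An injective map of bounded
orders preserving `⊥` and `⊤` into a simple order forces the source to be simple.
-/

theorem IsSimpleOrder.of_injective {α β : Type*} [LE α] [BoundedOrder α] [LE β] [BoundedOrder β]
    [IsSimpleOrder β] {f : α → β} (hf : Function.Injective f) (hbot : f ⊥ = ⊥) (htop : f ⊤ = ⊤) :
    IsSimpleOrder α where
  exists_pair_ne := ⟨⊥, ⊤, fun h => bot_ne_top (by rw [← hbot, ← htop, h])⟩
  eq_bot_or_eq_top a := (eq_bot_or_eq_top (f a)).imp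
    (fun h => hf (h.trans hbot.symm)) (fun h => hf (h.trans htop.symm))

namespace OreLocalization

section MulAction

variable {R : Type*} [Monoid R] {S : Submonoid R} [OreSet S] {X : Type*} [MulAction R X]

theorem oreDiv_one_injective (hS : ∀ s : S, IsSMulRegular X (s : R)) :
    Function.Injective fun x : X => x /ₒ (1 : S) := by
  intro x y hxy
  obtain ⟨u, v, huv, hu⟩ := oreDiv_eq_iff.mp hxy
  have : (u : R) = v := by simpa using hu
  rw [Submonoid.smul_def] at huv
  exact (hS u (show (u : R) • y = (u : R) • x by rw [huv, this])).symm

end MulAction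

section Module

variable {R : Type*} [Ring R] {S : Submonoid R} [OreSet S] {X : Type*} [AddCommGroup X] [Module R X]

variable (S X) in
def numeratorLinearMap : X →ₗ[R] X[S⁻¹] where
  toFun x := x /ₒ 1
  map_add' _ _ := add_oreDiv.symm
  map_smul' r x := (smul_oreDiv_one r x).symm

theorem oreDiv_mem_iff_oreDiv_one_mem {N : Submodule R[S⁻¹] X[S⁻¹]} {x : X} {s : S} :
    x /ₒ s ∈ N ↔ x /ₒ (1 : S) ∈ N := by
  constructor
  · intro h
    rw [← OreLocalization.smul_cancel (s := s) (t := 1)]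
    exact N.smul_mem _ h
  · intro h
    rw [← one_mul s, ← OreLocalization.one_div_smul (s := 1)]
    exact N.smul_mem _ h

variable (S X) in
def comapNumerator (N : Submodule R[S⁻¹] X[S⁻¹]) : Submodule R X :=
  (N.restrictScalars R).comap (numeratorLinearMap S X)

theorem comapNumerator_injective : Function.Injective (comapNumerator S X) := by
  intro N₁ N₂ h
  ext z
  induction z with | _ x s
  exact oreDiv_mem_iff_oreDiv_one_mem.trans
    ((SetLike.ext_iff.mp h x).trans oreDiv_mem_iff_oreDiv_one_mem.symm)

theorem isSimpleModule_of_isSMulRegular [IsSimpleModule R X]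
    (hS : ∀ s : S, IsSMulRegular X (s : R)) : IsSimpleModule R[S⁻¹] X[S⁻¹] := by
  refine (isSimpleModule_iff _ _).mpr (IsSimpleOrder.of_injective comapNumerator_injective ?_ ?_)
  · exact LinearMap.ker_eq_bot.mpr (oreDiv_one_injective hS)
  · rfl

end Module

end OreLocalization

theorem stmt_10 (A : Type*) [Ring A] (f : A)
    [OreSet (Submonoid.powers f)]
    (M : Type*) [AddCommGroup M] [Module A M]
    (hsimple : IsSimpleModule A M)
    (hinj : Function.Injective fun m : M => f • m) :
    IsSimpleModule (OreLocalization (Submonoid.powers f) A)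
      (OreLocalization (Submonoid.powers f) M) := by
  refine isSimpleModule_of_isSMulRegular ?_
  rintro ⟨_, n, rfl⟩
  exact IsSMulRegular.pow n hinj
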